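/- Let f : ℤ₂^N → ℤ₂ be the affine function f(x) = x_g for some fixed index g, and suppose g does not appear in the functions f₂,...,fₙ (i.e. the coefficient of x_g in each f_j, j ≥ 2, is zero) nor in φ except possibly a term p·x_g. Then the n-qubit state (1/√(2^N)) ∑_x (-1)^{φ(x)} |f(x)⟩⊗|f₂(x)⟩⊗⋯⊗|fₙ(x)⟩ factorizes as |(−)^p⟩ ⊗ ψ, where |(−)^0⟩ = |+⟩ = (|0⟩+|1⟩)/√2, |(−)^1⟩ = |−⟩ = (|0⟩−|1⟩)/√2, and ψ = (1/√(2^{N−1})) ∑_{x'} (−1)^{φ'(x')} |f₂(x')⟩⊗⋯⊗|fₙ(x')⟩ with x' ranging over assignments to the remaining N−1 indeterminates and φ' obtained from φ by deleting the x_g term. -/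

import Mathlib

open TensorProduct

/-- The standard basis vector `|x⟩` of a qubit. -/
noncomputable def ket (x : ZMod 2) : ZMod 2 → ℂ := Pi.single x 1

/-- The standard basis vector of an `m`-qubit register, indexed by a bit string. -/
noncomputable def kets (m : ℕ) (v : Fin m → ZMod 2) : (Fin m → ZMod 2) → ℂ := Pi.single v 1

open Function

/-! Neither the register `f₂, …, fₙ` nor the phase, apart from its term `p_g x_g`, depends on `x_g`,
so every summand depends on `x` only through `x_g` and the assignment `x` with `x_g := 0`.
Summing over these two pieces separately turns the sum into a pure tensor, and the
normalisation splits as `1/√(2^N) = (1/√2) (1/√(2^(N-1)))`. -/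

theorem neg_one_pow_val_add {R : Type*} [Ring R] (a b : ZMod 2) :
    (-1 : R) ^ (a + b).val = (-1) ^ a.val * (-1) ^ b.val := by
  rw [← pow_add, ZMod.val_add, ← neg_one_pow_eq_pow_mod_two]

theorem sum_mul_eq_mul_add_sum_mul_update_zero {ι R : Type*} [Fintype ι] [DecidableEq ι]
    [NonUnitalNonAssocSemiring R] (a x : ι → R) (g : ι) :
    ∑ i, a i * x i = a g * x g + ∑ i, a i * update x g 0 i := by
  rw [← Finset.add_sum_erase _ _ (Finset.mem_univ g),
    ← Finset.add_sum_erase _ _ (Finset.mem_univ g), update_self, mul_zero, zero_add]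
  exact congrArg _ <| Finset.sum_congr rfl fun i hi => by
    rw [update_of_ne (Finset.ne_of_mem_erase hi)]

theorem Fintype.sum_pi_eq_sum_sum_update {ι α M : Type*} [Fintype ι] [DecidableEq ι]
    [Fintype α] [DecidableEq α] [Zero α] [AddCommMonoid M] (F : (ι → α) → M) (g : ι) :
    ∑ x, F x = ∑ y, ∑ x ∈ Finset.univ.filter (fun x : ι → α => x g = 0), F (update x g y) := by
  rw [← Finset.sum_fiberwise Finset.univ (fun x => x g) F]
  refine Finset.sum_congr rfl fun y _ => ?_
  refine Finset.sum_nbij' (update · g 0) (update · g y) ?_ ?_ ?_ ?_ fun _ _ => ?_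
  all_goals simp_all
  subst_vars
  rw [update_eq_self]

theorem sum_smul_tmul_eq_tmul_sum {ι α R M N : Type*} [Fintype ι] [DecidableEq ι]
    [Fintype α] [DecidableEq α] [Zero α] [CommSemiring R] [AddCommMonoid M] [Module R M]
    [AddCommMonoid N] [Module R N] (g : ι) (u : α → R) (v : (ι → α) → R)
    (a : α → M) (b : (ι → α) → N) :
    ∑ x, (u (x g) * v (update x g 0)) • (a (x g) ⊗ₜ[R] b (update x g 0))
      = (∑ y, u y • a y) ⊗ₜ[R]
          ∑ x ∈ Finset.univ.filter (fun x : ι → α => x g = 0), v x • b x := by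
  rw [Fintype.sum_pi_eq_sum_sum_update _ g, sum_tmul]
  refine Finset.sum_congr rfl fun y _ => ?_
  rw [tmul_sum]
  refine Finset.sum_congr rfl fun x hx => ?_
  have hx0 : update x g 0 = x := by
    rw [← (Finset.mem_filter.1 hx).2, update_eq_self]
  rw [update_idem, hx0, update_self, smul_tmul_smul]

theorem one_div_sqrt_two_pow_eq {N : ℕ} (hN : N ≠ 0) :
    1 / Real.sqrt (2 ^ N) = 1 / Real.sqrt 2 * (1 / Real.sqrt (2 ^ (N - 1))) := by
  obtain ⟨n, rfl⟩ := Nat.exists_eq_succ_of_ne_zero hN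
  rw [pow_succ', Real.sqrt_mul zero_le_two, Nat.succ_sub_one, one_div_mul_one_div]

/-- Suppose the first qubit carries the formula `f₁(x) = x_g`, the remaining
qubit formulas `f j` (with coefficients `c j`) do not involve `x_g`, and the phase
`φ(x) = p₀ + ∑ p_i x_i` involves `x_g` only through the term `p_g · x_g`.  Then the state
`(1/√(2^N)) ∑_x (-1)^(φ x) |x_g⟩ ⊗ |f₂ x⟩⋯|fₙ x⟩` factorizes as
`|(−)^{p_g}⟩ ⊗ ψ`, where `|(−)^p⟩ = (1/√2) ∑_y (-1)^{p·y} |y⟩` and `ψ` is the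
`(N−1)`-indeterminate state obtained by restricting to assignments with `x_g = 0`
(i.e. deleting the `x_g` term of `φ`). -/
theorem stmt7 (N m : ℕ) (g : Fin N)
    (f : Fin m → (Fin N → ZMod 2) → ZMod 2)
    (c₀ : Fin m → ZMod 2) (c : Fin m → Fin N → ZMod 2)
    (hf : ∀ j x, f j x = c₀ j + ∑ i, c j i * x i)
    (hcg : ∀ j, c j g = 0)
    (φ : (Fin N → ZMod 2) → ZMod 2) (p₀ : ZMod 2) (p : Fin N → ZMod 2)
    (hφ : ∀ x, φ x = p₀ + ∑ i, p i * x i) :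
    ((1 / Real.sqrt (2 ^ N) : ℝ) : ℂ) •
        ∑ x : Fin N → ZMod 2, ((-1 : ℂ) ^ (φ x).val) •
          (ket (x g) ⊗ₜ[ℂ] kets m (fun j => f j x))
      = (((1 / Real.sqrt 2 : ℝ) : ℂ) •
          ∑ y : ZMod 2, ((-1 : ℂ) ^ (p g * y).val) • ket y) ⊗ₜ[ℂ]
        (((1 / Real.sqrt (2 ^ (N - 1)) : ℝ) : ℂ) •
          ∑ x ∈ Finset.univ.filter (fun x : Fin N → ZMod 2 => x g = 0),
            ((-1 : ℂ) ^ (φ x).val) • kets m (fun j => f j x)) := by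
  have hphase : ∀ x, φ x = p g * x g + φ (update x g 0) := fun x => by
    rw [hφ, hφ, sum_mul_eq_mul_add_sum_mul_update_zero p x g]
    ring
  have hregister : ∀ x, (fun j => f j x) = fun j => f j (update x g 0) := fun x =>
    funext fun j => by
      rw [hf, hf, sum_mul_eq_mul_add_sum_mul_update_zero (c j) x g, hcg, zero_mul, zero_add]
  have hterm : ∀ x, (-1 : ℂ) ^ (φ x).val • (ket (x g) ⊗ₜ[ℂ] kets m fun j => f j x)
      = ((-1 : ℂ) ^ (p g * x g).val * (-1) ^ (φ (update x g 0)).val) •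
          (ket (x g) ⊗ₜ[ℂ] kets m fun j => f j (update x g 0)) := fun x => by
    rw [← neg_one_pow_val_add, ← hphase, ← hregister]
  rw [Finset.sum_congr rfl fun x _ => hterm x,
    sum_smul_tmul_eq_tmul_sum g (fun y => (-1 : ℂ) ^ (p g * y).val) (fun x => (-1) ^ (φ x).val)
      ket fun x => kets m fun j => f j x,
    smul_tmul_smul, one_div_sqrt_two_pow_eq g.pos.ne', Complex.ofReal_mul]
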